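/- Let (X, 𝒜, μ) be a σ-finite measure space and D ⊆ ℝ a measurable set of parameter values equipped with Lebesgue measure. For each θ' ∈ D let p(·;θ'): X → ℝ be measurable with p(·;θ') ≥ 0 and ∫ p(x;θ') dμ(x) = 1, and assume (θ', x) ↦ p(x;θ') is jointly measurable. Fix θ ∈ D with p(x;θ) > 0 for μ-a.e. x, and let g: X → ℝ be an unbiased estimator (∫ p(x;θ')|g(x)| dμ(x) < ∞ and ∫ p(x;θ') g(x) dμ(x) = θ' for every θ' ∈ D) with ∫ p(x;θ)(g(x)−θ)² dμ(x) < ∞. Let N ≥ 1 and for i = 1,…,N let f_i: D×D → ℝ be measurable such that (θ₁,θ₂,x) ↦ f_i(θ₁,θ₂)·(p(x;θ₁) − p(x;θ₂))·(1 + |g(x)−θ|) is integrable on D×D×X. Define q_i(x) = ∬ f_i(θ₁,θ₂)(p(x;θ₁) − p(x;θ₂)) dθ₁ dθ₂ and t_i = ∬ f_i(θ₁,θ₂)(θ₁ − θ₂) dθ₁ dθ₂, assume ∫ q_i(x)²/p(x;θ) dμ(x) < ∞ for every i, and assume the N×N matrix B with entries B_{ij} = ∫ q_i(x)q_j(x)/p(x;θ)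 dμ(x) is invertible. Then ∫ p(x;θ)(g(x)−θ)² dμ(x) ≥ tᵀ B⁻¹ t, where t = (t₁,…,t_N)ᵀ. -/

import Mathlib

/-!
For every coefficient vector `a`, put `Q = ∑ i, a i * q i`. Expanding
`0 ≤ ∫ p θ * (g - θ - Q / p θ) ^ 2` gives `2 ∫ Q (g - θ) - ∫ Q ^ 2 / p θ ≤ MSE`.
By Fubini, unbiasedness turns `∫ q i (g - θ)` into `t i`, because
`∫ (p θ₁ - p θ₂)(g - θ) = θ₁ - θ₂`; and `∫ Q ^ 2 / p θ = aᵀ B a`. Hence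
`2 aᵀ t - aᵀ B a ≤ MSE` for all `a`, and `a = B⁻¹ t` yields `tᵀ B⁻¹ t ≤ MSE`.
-/

open MeasureTheory Matrix

theorem Matrix.dotProduct_inv_mulVec_le_of_forall {n R : Type*} [Fintype n] [DecidableEq n]
    [CommRing R] [LinearOrder R] [IsStrictOrderedRing R] {B : Matrix n n R} (hB : IsUnit B.det)
    {v : n → R} {M : R} (h : ∀ a, 2 * (a ⬝ᵥ v) - a ⬝ᵥ (B *ᵥ a) ≤ M) :
    v ⬝ᵥ (B⁻¹ *ᵥ v) ≤ M := by
  have hBa : B *ᵥ (B⁻¹ *ᵥ v) = v := by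
    rw [mulVec_mulVec, mul_nonsing_inv B hB, one_mulVec]
  have := h (B⁻¹ *ᵥ v)
  rw [hBa, dotProduct_comm] at this
  linarith

section

variable {α : Type*} [MeasurableSpace α] {μ : Measure α}

theorem MeasureTheory.Integrable.mul_of_abs_le_one_add_abs {f h k : α → ℝ}
    (hf : Integrable (fun x => f x * (1 + |h x|)) μ) (hh : AEStronglyMeasurable h μ)
    (hk : AEStronglyMeasurable k μ) (hkh : ∀ x, |k x| ≤ 1 + |h x|) :
    Integrable (fun x => f x * k x) μ := by
  have hpos : ∀ x, 0 < 1 + |h x| := fun x => by positivity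
  have hbdd : Integrable (fun x => f x * (1 + |h x|) * (k x / (1 + |h x|))) μ := by
    refine hf.mul_bdd (hk.div₀ (aestronglyMeasurable_const.add hh.norm)) (c := 1) ?_
    filter_upwards with x
    rw [Real.norm_eq_abs, abs_div, abs_of_pos (hpos x)]
    exact div_le_one_of_le₀ (hkh x) (hpos x).le
  refine hbdd.congr (Filter.Eventually.of_forall fun x => ?_)
  field_simp [(hpos x).ne']

theorem MeasureTheory.Integrable.mul_div_of_sq_div {f g w : α → ℝ}
    (hf : Integrable (fun x => f x ^ 2 / w x) μ) (hg : Integrable (fun x => g x ^ 2 / w x) μ)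
    (hfm : AEStronglyMeasurable f μ) (hgm : AEStronglyMeasurable g μ)
    (hwm : AEStronglyMeasurable w μ) :
    Integrable (fun x => f x * g x / w x) μ := by
  refine ((hf.norm.add hg.norm).div_const 2).mono' ((hfm.mul hgm).div₀ hwm)
    (Filter.Eventually.of_forall fun x => ?_)
  have hamgm : 2 * |f x * g x| ≤ f x ^ 2 + g x ^ 2 := by
    rw [abs_mul]
    nlinarith [sq_nonneg (|f x| - |g x|), sq_abs (f x), sq_abs (g x)]
  simp only [Real.norm_eq_abs, abs_div, Pi.add_apply, abs_pow, sq_abs]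
  rw [← add_div, div_div, mul_comm (|w x|), ← div_div]
  gcongr
  linarith

theorem two_mul_integral_mul_sub_integral_sq_div_le {w h Q : α → ℝ}
    (hw : ∀ᵐ x ∂μ, 0 < w x) (hwh : Integrable (fun x => w x * h x ^ 2) μ)
    (hQh : Integrable (fun x => Q x * h x) μ) (hQ : Integrable (fun x => Q x ^ 2 / w x) μ) :
    2 * ∫ x, Q x * h x ∂μ - ∫ x, Q x ^ 2 / w x ∂μ ≤ ∫ x, w x * h x ^ 2 ∂μ := by
  have hsq : 0 ≤ ∫ x, w x * (h x - Q x / w x) ^ 2 ∂μ :=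
    integral_nonneg_of_ae <| hw.mono fun x hx => mul_nonneg hx.le (sq_nonneg _)
  have hexpand : (fun x => w x * (h x - Q x / w x) ^ 2)
      =ᵐ[μ] fun x => w x * h x ^ 2 - 2 * (Q x * h x) + Q x ^ 2 / w x := by
    filter_upwards [hw] with x hx
    field_simp
    ring
  have hcross : Integrable (fun x => w x * h x ^ 2 - 2 * (Q x * h x)) μ :=
    hwh.sub (hQh.const_mul 2)
  rw [integral_congr_ae hexpand, integral_add hcross hQ,
    integral_sub hwh (hQh.const_mul 2), integral_const_mul] at hsq
  linarith

theorem two_mul_dotProduct_sub_le_integral {ι : Type*} [Fintype ι] {w h : α → ℝ}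
    {q : ι → α → ℝ} (hw : ∀ᵐ x ∂μ, 0 < w x) (hwh : Integrable (fun x => w x * h x ^ 2) μ)
    (hqh : ∀ i, Integrable (fun x => q i x * h x) μ)
    (hqq : ∀ i j, Integrable (fun x => q i x * q j x / w x) μ) (a : ι → ℝ) :
    2 * (a ⬝ᵥ fun i => ∫ x, q i x * h x ∂μ)
        - a ⬝ᵥ (Matrix.of (fun i j => ∫ x, q i x * q j x / w x ∂μ) *ᵥ a)
      ≤ ∫ x, w x * h x ^ 2 ∂μ := by
  have hlin : (fun x => (∑ i, a i * q i x) * h x) = fun x => ∑ i, a i * (q i x * h x) := by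
    simp only [Finset.sum_mul, mul_assoc]
  have hquad : (fun x => (∑ i, a i * q i x) ^ 2 / w x)
      = fun x => ∑ i, ∑ j, a i * (a j * (q i x * q j x / w x)) := by
    funext x
    simp only [sq, Finset.sum_mul_sum, Finset.sum_div]
    exact Finset.sum_congr rfl fun i _ => Finset.sum_congr rfl fun j _ => by ring
  have hlin_int : ∀ i ∈ Finset.univ, Integrable (fun x => a i * (q i x * h x)) μ :=
    fun i _ => (hqh i).const_mul _
  have hquad_int : ∀ i j, Integrable (fun x => a i * (a j * (q i x * q j x / w x))) μ :=
    fun i j => ((hqq i j).const_mul _).const_mul _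
  have key := two_mul_integral_mul_sub_integral_sq_div_le hw hwh
    (hlin ▸ integrable_finsetSum _ hlin_int)
    (hquad ▸ integrable_finsetSum _ fun i _ => integrable_finsetSum _ fun j _ => hquad_int i j)
  rw [hlin, hquad, integral_finsetSum _ hlin_int,
    integral_finsetSum _ fun i _ => integrable_finsetSum _ fun j _ => hquad_int i j] at key
  simpa only [integral_finsetSum _ fun j _ => hquad_int _ j, integral_const_mul, dotProduct,
    mulVec, Matrix.of_apply, Finset.mul_sum, mul_comm (a _) (∫ _, _ ∂μ)] using key

theorem integral_sub_mul_sub_eq_sub {p₁ p₂ g : α → ℝ} {m₁ m₂ : ℝ} (c : ℝ)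
    (hp₁ : ∫ x, p₁ x ∂μ = 1) (hp₂ : ∫ x, p₂ x ∂μ = 1)
    (hg₁ : Integrable (fun x => p₁ x * g x) μ) (hg₂ : Integrable (fun x => p₂ x * g x) μ)
    (hm₁ : ∫ x, p₁ x * g x ∂μ = m₁) (hm₂ : ∫ x, p₂ x * g x ∂μ = m₂) :
    ∫ x, (p₁ x - p₂ x) * (g x - c) ∂μ = m₁ - m₂ := by
  have hi₁ := integrable_of_integral_eq_one hp₁
  have hi₂ := integrable_of_integral_eq_one hp₂
  have hsplit : (fun x => (p₁ x - p₂ x) * (g x - c))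
      = fun x => (p₁ x * g x - p₂ x * g x) - c * (p₁ x - p₂ x) := by
    funext x; ring
  have hdiff : Integrable (fun x => p₁ x * g x - p₂ x * g x) μ := hg₁.sub hg₂
  have hmass : Integrable (fun x => c * (p₁ x - p₂ x)) μ := (hi₁.sub hi₂).const_mul c
  rw [hsplit, integral_sub hdiff hmass, integral_const_mul,
    integral_sub hg₁ hg₂, integral_sub hi₁ hi₂, hp₁, hp₂, hm₁, hm₂]
  ring

theorem integral_setIntegral_mul_sub_eq_of_unbiased [SFinite μ] {D : Set ℝ}
    (hD : MeasurableSet D) {p : ℝ → α → ℝ} (hp1 : ∀ θ' ∈ D, ∫ x, p θ' x ∂μ = 1) {g : α → ℝ}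
    (hgint : ∀ θ' ∈ D, Integrable (fun x => p θ' x * g x) μ)
    (hunbiased : ∀ θ' ∈ D, ∫ x, p θ' x * g x ∂μ = θ') (θ : ℝ) {F : ℝ → ℝ → ℝ}
    (hF : Integrable (fun w : (ℝ × ℝ) × α =>
        F w.1.1 w.1.2 * (p w.1.1 w.2 - p w.1.2 w.2) * (g w.2 - θ))
      (((volume : Measure (ℝ × ℝ)).restrict (D ×ˢ D)).prod μ)) :
    ∫ x, (∫ z in D ×ˢ D, F z.1 z.2 * (p z.1 x - p z.2 x)) * (g x - θ) ∂μ
      = ∫ z in D ×ˢ D, F z.1 z.2 * (z.1 - z.2) := by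
  simp_rw [← integral_mul_const]
  rw [← integral_integral_swap
    (f := fun (z : ℝ × ℝ) (x : α) => F z.1 z.2 * (p z.1 x - p z.2 x) * (g x - θ)) hF]
  refine setIntegral_congr_fun (hD.prod hD) fun z ⟨hz₁, hz₂⟩ => ?_
  simp_rw [mul_assoc]
  rw [integral_const_mul, integral_sub_mul_sub_eq_sub θ (hp1 _ hz₁) (hp1 _ hz₂) (hgint _ hz₁)
    (hgint _ hz₂) (hunbiased _ hz₁) (hunbiased _ hz₂)]

end

theorem lower_bound_series_B_general {X : Type*} [MeasurableSpace X]
    (μ : Measure X) [SigmaFinite μ]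
    (D : Set ℝ) (hD : MeasurableSet D)
    (p : ℝ → X → ℝ)
    (hpjm : Measurable (fun z : ℝ × X => p z.1 z.2))
    (hp1 : ∀ θ' ∈ D, ∫ x, p θ' x ∂μ = 1)
    (θ : ℝ) (hθpos : ∀ᵐ x ∂μ, 0 < p θ x)
    (g : X → ℝ) (hgm : Measurable g)
    (hgint : ∀ θ' ∈ D, Integrable (fun x => p θ' x * g x) μ)
    (hunbiased : ∀ θ' ∈ D, ∫ x, p θ' x * g x ∂μ = θ')
    (hmse : Integrable (fun x => p θ x * (g x - θ)^2) μ)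
    (N : ℕ)
    (f : Fin N → ℝ → ℝ → ℝ)
    (hfint : ∀ i, Integrable
      (fun w : (ℝ × ℝ) × X =>
        f i w.1.1 w.1.2 * (p w.1.1 w.2 - p w.1.2 w.2) * (1 + |g w.2 - θ|))
      (((volume : Measure (ℝ × ℝ)).restrict (D ×ˢ D)).prod μ))
    (q : Fin N → X → ℝ)
    (hq : ∀ i x, q i x = ∫ z in D ×ˢ D, f i z.1 z.2 * (p z.1 x - p z.2 x))
    (t : Fin N → ℝ)
    (ht : ∀ i, t i = ∫ z in D ×ˢ D, f i z.1 z.2 * (z.1 - z.2))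
    (hqint : ∀ i, Integrable (fun x => (q i x)^2 / p θ x) μ)
    (B : Matrix (Fin N) (Fin N) ℝ)
    (hB : ∀ i j, B i j = ∫ x, q i x * q j x / p θ x ∂μ)
    (hBinv : IsUnit B.det) :
    t ⬝ᵥ (B⁻¹ *ᵥ t) ≤ ∫ x, p θ x * (g x - θ)^2 ∂μ := by
  have hpθ : Measurable (p θ) := hpjm.comp (measurable_const.prodMk measurable_id)
  have hgθ : Measurable fun w : (ℝ × ℝ) × X => g w.2 - θ := (hgm.comp measurable_snd).sub_const θ
  have hF i := (hfint i).mul_of_abs_le_one_add_abs hgθ.aestronglyMeasurable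
    aestronglyMeasurable_const (k := fun _ => 1) fun w => by simp
  have hFg i := (hfint i).mul_of_abs_le_one_add_abs hgθ.aestronglyMeasurable
    hgθ.aestronglyMeasurable fun w => by simp
  have hqm i : AEStronglyMeasurable (q i) μ := by
    rw [funext (hq i)]
    simpa only [mul_one] using (hF i).integral_prod_right.aestronglyMeasurable
  have hqg i : Integrable (fun x => q i x * (g x - θ)) μ := by
    simpa only [hq, integral_mul_const] using (hFg i).integral_prod_right
  have hqq i j : Integrable (fun x => q i x * q j x / p θ x) μ :=
    (hqint i).mul_div_of_sq_div (hqint j) (hqm i) (hqm j) hpθ.aestronglyMeasurable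
  refine dotProduct_inv_mulVec_le_of_forall hBinv fun a => ?_
  have hBeq : B = Matrix.of fun i j => ∫ x, q i x * q j x / p θ x ∂μ := Matrix.ext hB
  have hteq : t = fun i => ∫ x, q i x * (g x - θ) ∂μ := funext fun i => by
    rw [ht, funext (hq i)]
    exact (integral_setIntegral_mul_sub_eq_of_unbiased hD hp1 hgint hunbiased θ (hFg i)).symm
  rw [hBeq, hteq]
  exact two_mul_dotProduct_sub_le_integral hθpos hmse hqg hqq a

/-- Lower Bounds Series B (BBS): the mean-squared error of any unbiased estimator is at
least `tᵀ B⁻¹ t`, where the constraints are obtained by integrating differences of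
densities against weight functions `f i` over `D × D`. -/
theorem lower_bound_series_B {X : Type*} [MeasurableSpace X]
    (μ : Measure X) [SigmaFinite μ]
    (D : Set ℝ) (hD : MeasurableSet D)
    (p : ℝ → X → ℝ)
    (hpjm : Measurable (fun z : ℝ × X => p z.1 z.2))
    (hp0 : ∀ θ' ∈ D, ∀ x, 0 ≤ p θ' x)
    (hp1 : ∀ θ' ∈ D, ∫ x, p θ' x ∂μ = 1)
    (θ : ℝ) (hθ : θ ∈ D) (hθpos : ∀ᵐ x ∂μ, 0 < p θ x)
    (g : X → ℝ) (hgm : Measurable g)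
    (hgint : ∀ θ' ∈ D, Integrable (fun x => p θ' x * g x) μ)
    (hunbiased : ∀ θ' ∈ D, ∫ x, p θ' x * g x ∂μ = θ')
    (hmse : Integrable (fun x => p θ x * (g x - θ)^2) μ)
    (N : ℕ) (hN : 1 ≤ N)
    (f : Fin N → ℝ → ℝ → ℝ)
    (hfm : ∀ i, Measurable (fun z : ℝ × ℝ => f i z.1 z.2))
    (hfint : ∀ i, Integrable
      (fun w : (ℝ × ℝ) × X =>
        f i w.1.1 w.1.2 * (p w.1.1 w.2 - p w.1.2 w.2) * (1 + |g w.2 - θ|))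
      (((volume : Measure (ℝ × ℝ)).restrict (D ×ˢ D)).prod μ))
    (q : Fin N → X → ℝ)
    (hq : ∀ i x, q i x = ∫ z in D ×ˢ D, f i z.1 z.2 * (p z.1 x - p z.2 x))
    (t : Fin N → ℝ)
    (ht : ∀ i, t i = ∫ z in D ×ˢ D, f i z.1 z.2 * (z.1 - z.2))
    (hqint : ∀ i, Integrable (fun x => (q i x)^2 / p θ x) μ)
    (B : Matrix (Fin N) (Fin N) ℝ)
    (hB : ∀ i j, B i j = ∫ x, q i x * q j x / p θ x ∂μ)
    (hBinv : IsUnit B.det) :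
    t ⬝ᵥ (B⁻¹ *ᵥ t) ≤ ∫ x, p θ x * (g x - θ)^2 ∂μ :=
  lower_bound_series_B_general μ D hD p hpjm hp1 θ hθpos g hgm hgint hunbiased hmse N f hfint q hq t
    ht hqint B hB hBinv
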